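/- arXiv:2202.09930 — 5 statements merged into one kernel-verified Lean document; each statement's English description precedes it below -/
import Mathlib

section
/- Cycle elimination normal form: suppose the graph G has a self-loop at every vertex. If a plan P={π_1,...,π_n} has a vertex-disjoint decomposition with segment boundaries 1=t_0<...<t_r=K+1, and within some segment [t_{k-1},t_k−1] agent i's path visits the same vertex at two times a<b (a cycle within the segment), then replacing the subpath of π_i between a and b by waiting in place at that vertex (using the self-loop) yields a plan with a vertex-disjoint decomposition with the same boundaries; in particular the index does not increase. -/
/-- Paths of length `m` (occupying positions `0,...,m-1`) are non-colliding:
no vertex collisions and no edge swaps. -/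
def NonColliding {V : Type*} (m : ℕ) (p q : ℕ → V) : Prop :=
  (∀ k < m, p k ≠ q k) ∧ ∀ k, k + 1 < m → (p k, p (k + 1)) ≠ (q (k + 1), q k)

/-- The path segments over the time interval `[a, b)` are pairwise vertex disjoint. -/
def SegDisjoint {V : Type*} {n : ℕ} (π : Fin n → ℕ → V) (a b : ℕ) : Prop :=
  ∀ i j : Fin n, i ≠ j → Disjoint (π i '' Set.Ico a b) (π j '' Set.Ico a b)

/-- A vertex-disjoint decomposition of a plan of length `K` (times `0,...,K-1`):
boundaries `0 = t 0 < t 1 < ... < t r = K`, with each segment pairwise vertex disjoint. -/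
def IsDecomp {V : Type*} {n : ℕ} (K : ℕ) (π : Fin n → ℕ → V) (r : ℕ)
    (t : Fin (r + 1) → ℕ) : Prop :=
  t 0 = 0 ∧ t (Fin.last r) = K ∧ StrictMono t ∧
    ∀ k : Fin r, SegDisjoint π (t k.castSucc) (t k.succ)

/-- The index of a plan: the minimal index of a vertex-disjoint decomposition. -/
noncomputable def planIndex {V : Type*} {n : ℕ} (K : ℕ) (π : Fin n → ℕ → V) : ℕ :=
  sInf {r | ∃ t : Fin (r + 1) → ℕ, IsDecomp K π r t}

theorem cycle_elimination {V : Type*} {n K r : ℕ} (E : V → V → Prop)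
    (hloop : ∀ v, E v v) (π : Fin n → ℕ → V)
    (hpath : ∀ i0 : Fin n, ∀ k, k + 1 < K → E (π i0 k) (π i0 (k + 1)))
    (hplan : ∀ i0 j : Fin n, i0 ≠ j → NonColliding K (π i0) (π j))
    (t : Fin (r + 1) → ℕ) (hdec : IsDecomp K π r t)
    (i : Fin n) (a b : ℕ) (hab : a < b)
    (k : Fin r) (hka : t k.castSucc ≤ a) (hkb : b < t k.succ)
    (hcycle : π i a = π i b)
    (π' : Fin n → ℕ → V)
    (hπ' : π' = Function.update π i (fun s => if a ≤ s ∧ s ≤ b then π i a else π i s)) :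
    (∀ i0 : Fin n, ∀ k', k' + 1 < K → E (π' i0 k') (π' i0 (k' + 1))) ∧
      (∀ i0 j : Fin n, i0 ≠ j → NonColliding K (π' i0) (π' j)) ∧
      IsDecomp K π' r t := by
  have hπ'i : ∀ s, π' i s = if a ≤ s ∧ s ≤ b then π i a else π i s := by
    intro s; rw [hπ', Function.update_self]
  have hπ'j : ∀ j : Fin n, j ≠ i → π' j = π j := by
    intro j hj; rw [hπ', Function.update_of_ne hj]
  have hdisj := hdec.2.2.2 k
  -- key : π i a differs from any other agent's vertex within segment k
  have key : ∀ j : Fin n, j ≠ i → ∀ s, t k.castSucc ≤ s → s < t k.succ → π i a ≠ π j s := by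
    intro j hj s hs1 hs2 heq
    have h1 : π i a ∈ π i '' Set.Ico (t k.castSucc) (t k.succ) :=
      ⟨a, ⟨hka, lt_trans hab hkb⟩, rfl⟩
    have h2 : π i a ∈ π j '' Set.Ico (t k.castSucc) (t k.succ) :=
      ⟨s, ⟨hs1, hs2⟩, heq.symm⟩
    exact Set.disjoint_left.mp (hdisj i j (Ne.symm hj)) h1 h2
  refine ⟨?_, ?_, ?_⟩
  · -- edges
    intro i0 k' hk'
    by_cases hi : i0 = i
    · subst hi
      rw [hπ'i, hπ'i]
      by_cases h1 : a ≤ k' ∧ k' ≤ b <;> by_cases h2 : a ≤ k' + 1 ∧ k' + 1 ≤ b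
      · simp only [if_pos h1, if_pos h2]; exact hloop _
      · have hkb' : k' = b := by omega
        simp only [if_pos h1, if_neg h2]
        rw [hcycle, hkb']
        exact hpath i0 b (hkb' ▸ hk')
      · have hka' : k' + 1 = a := by omega
        simp only [if_neg h1, if_pos h2]
        rw [show π i0 a = π i0 (k' + 1) by rw [hka']]
        exact hpath i0 k' hk'
      · simp only [if_neg h1, if_neg h2]; exact hpath i0 k' hk'
    · rw [hπ'j i0 hi]; exact hpath i0 k' hk'
  · -- non-colliding
    intro i0 j hne
    by_cases hi0 : i0 = i
    · subst hi0
      have hj : j ≠ i0 := Ne.symm hne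
      rw [hπ'j j hj]
      constructor
      · intro s hs
        rw [hπ'i]
        by_cases h1 : a ≤ s ∧ s ≤ b
        · rw [if_pos h1]
          exact key j hj s (le_trans hka h1.1) (lt_of_le_of_lt h1.2 hkb)
        · rw [if_neg h1]; exact (hplan i0 j hne).1 s hs
      · intro s hs
        rw [hπ'i, hπ'i]
        by_cases h1 : a ≤ s ∧ s ≤ b <;> by_cases h2 : a ≤ s + 1 ∧ s + 1 ≤ b
        · simp only [if_pos h1, if_pos h2]
          intro heq
          rw [Prod.mk.injEq] at heq
          exact key j hj (s + 1) (le_trans hka h2.1) (lt_of_le_of_lt h2.2 hkb) heq.1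
        · have hsb : s = b := by omega
          simp only [if_pos h1, if_neg h2]
          rw [hcycle, hsb]
          exact (hplan i0 j hne).2 b (hsb ▸ hs)
        · have hsa : s + 1 = a := by omega
          simp only [if_neg h1, if_pos h2]
          rw [show π i0 a = π i0 (s + 1) by rw [hsa]]
          exact (hplan i0 j hne).2 s hs
        · simp only [if_neg h1, if_neg h2]; exact (hplan i0 j hne).2 s hs
    · rw [hπ'j i0 hi0]
      by_cases hj : j = i
      · subst hj
        constructor
        · intro s hs
          rw [hπ'i]
          by_cases h1 : a ≤ s ∧ s ≤ b
          · rw [if_pos h1]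
            exact fun h => key i0 hi0 s (le_trans hka h1.1) (lt_of_le_of_lt h1.2 hkb) h.symm
          · rw [if_neg h1]; exact (hplan i0 j hne).1 s hs
        · intro s hs
          rw [hπ'i, hπ'i]
          by_cases h1 : a ≤ s ∧ s ≤ b <;> by_cases h2 : a ≤ s + 1 ∧ s + 1 ≤ b
          · simp only [if_pos h1, if_pos h2]
            intro heq
            rw [Prod.mk.injEq] at heq
            exact key i0 hi0 s (le_trans hka h1.1) (lt_of_le_of_lt h1.2 hkb) heq.1.symm
          · have hsb : s = b := by omega
            simp only [if_pos h1, if_neg h2]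
            rw [hcycle, hsb]
            exact (hplan i0 j hne).2 b (hsb ▸ hs)
          · have hsa : s + 1 = a := by omega
            simp only [if_neg h1, if_pos h2]
            rw [show π j a = π j (s + 1) by rw [hsa]]
            exact (hplan i0 j hne).2 s hs
          · simp only [if_neg h1, if_neg h2]; exact (hplan i0 j hne).2 s hs
      · rw [hπ'j j hj]; exact hplan i0 j hne
  · -- decomposition
    obtain ⟨h0, hK, hmono, hseg⟩ := hdec
    refine ⟨h0, hK, hmono, ?_⟩
    intro c
    have hsub : ∀ j : Fin n,
        π' j '' Set.Ico (t c.castSucc) (t c.succ) ⊆ π j '' Set.Ico (t c.castSucc) (t c.succ) := by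
      intro j
      by_cases hj : j = i
      · subst hj
        rintro v ⟨s, hsIco, rfl⟩
        have hs1 := hsIco.1
        have hs2 := hsIco.2
        rw [hπ'i]
        by_cases h1 : a ≤ s ∧ s ≤ b
        · rw [if_pos h1]
          -- s is in both segment c and segment k, so c = k
          have hck : c = k := by
            by_contra hck
            have hne : (c : ℕ) ≠ (k : ℕ) := fun h => hck (Fin.ext h)
            rcases lt_or_gt_of_ne hne with h | h
            · have : t c.succ ≤ t k.castSucc :=
                hmono.monotone (by simp only [Fin.le_def, Fin.val_succ, Fin.coe_castSucc]; omega)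
              omega
            · have : t k.succ ≤ t c.castSucc :=
                hmono.monotone (by simp only [Fin.le_def, Fin.val_succ, Fin.coe_castSucc]; omega)
              omega
          exact ⟨a, ⟨hck ▸ hka, hck ▸ lt_trans hab hkb⟩, rfl⟩
        · rw [if_neg h1]; exact ⟨s, hsIco, rfl⟩
      · rw [hπ'j j hj]
    intro i0 j hne
    exact (hseg c i0 j hne).mono (hsub i0) (hsub j)
end

section
/- If within every segment of a vertex-disjoint decomposition the path of a new agent π_1 avoids all vertices visited by any path of P_{-1}={π_2,...,π_n} during that segment's time window, then the same decomposition boundaries form a vertex-disjoint decomposition of the extended plan P={π_1,...,π_n}; hence the index of P is at most the index of the given decomposition of P_{-1}. (Correctness of the SR-A* timed-obstacle construction.) -/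
theorem sr_astar_correct {V : Type*} {n K r : ℕ} (π : Fin n → ℕ → V)
    (t : Fin (r + 1) → ℕ) (hdec : IsDecomp K π r t)
    (σ : ℕ → V)
    (havoid : ∀ k : Fin r, ∀ s ∈ Set.Ico (t k.castSucc) (t k.succ), ∀ j : Fin n,
      σ s ∉ π j '' Set.Ico (t k.castSucc) (t k.succ)) :
    IsDecomp K (Matrix.vecCons σ π) r t ∧ planIndex K (Matrix.vecCons σ π) ≤ r := by
  obtain ⟨h0, hK, hmono, hseg⟩ := hdec
  have hσdisj : ∀ k : Fin r, ∀ j : Fin n,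
      Disjoint (σ '' Set.Ico (t k.castSucc) (t k.succ))
        (π j '' Set.Ico (t k.castSucc) (t k.succ)) := by
    intro k j
    rw [Set.disjoint_left]
    rintro x ⟨s, hs, rfl⟩ hx
    exact havoid k s hs j hx
  have hdec' : IsDecomp K (Matrix.vecCons σ π) r t := by
    refine ⟨h0, hK, hmono, fun k i j hij => ?_⟩
    induction i using Fin.cases with
    | zero =>
      induction j using Fin.cases with
      | zero => exact absurd rfl hij
      | succ j' => simpa using hσdisj k j'
    | succ i' =>
      induction j using Fin.cases with
      | zero => simpa using (hσdisj k i').symm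
      | succ j' =>
        have : i' ≠ j' := fun h => hij (by rw [h])
        simpa using hseg k i' j' this
  exact ⟨hdec', Nat.sInf_le ⟨t, hdec'⟩⟩
end

section
/- Lower bound on index from vertex sharing: if in a plan P two distinct paths π_i and π_j visit a common vertex v at times T_i and T_j respectively with T_i<T_j, then every vertex-disjoint decomposition of P must contain a segmentation point t_ℓ with T_i < t_ℓ ≤ T_j; consequently, if there are m pairwise 'nested or ordered' shared-vertex events with pairwise disjoint time intervals (T_i^{(1)},T_j^{(1)}],...,(T_i^{(m)},T_j^{(m)}], then the index of P is at least m+1. -/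
/-!
Two agents that occupy the same vertex `v` at times `Ti < Tj` cannot lie in one vertex-disjoint
segment, so a decomposition boundary falls in `(Ti, Tj]`. Disjoint event intervals force distinct
boundaries, none of which is the first boundary `0` or the last one `K`; hence the decomposition
has at least `m + 2` boundaries. Since the paths never collide, the unit-step decomposition exists,
so the index is an infimum over a nonempty set of decompositions and inherits the bound.
-/

theorem Fin.exists_castSucc_le_lt_succ {α : Type*} [LinearOrder α] {r : ℕ} (t : Fin (r + 1) → α)
    {a : α} (h0 : t 0 ≤ a) (hlast : a < t (Fin.last r)) :
    ∃ k : Fin r, t k.castSucc ≤ a ∧ a < t k.succ := by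
  by_contra! h
  exact (Fin.induction (motive := fun k => t k ≤ a) h0 h (Fin.last r)).not_gt hlast

theorem Fintype.card_add_two_le_of_injective {α β : Type*} [Fintype α] [Fintype β]
    [DecidableEq α] {f : β → α} (hf : Function.Injective f) {x y : α} (hxy : x ≠ y)
    (hx : ∀ b, f b ≠ x) (hy : ∀ b, f b ≠ y) :
    Fintype.card β + 2 ≤ Fintype.card α := by
  have hdisj : Disjoint (Finset.univ.map ⟨f, hf⟩) {x, y} := by
    simp [Finset.disjoint_left, hx, hy]
  calc Fintype.card β + 2 = (Finset.univ.map ⟨f, hf⟩ ∪ {x, y}).card := by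
        rw [Finset.card_union_of_disjoint hdisj, Finset.card_map, Finset.card_pair hxy,
          Finset.card_univ]
    _ ≤ Fintype.card α := Finset.card_le_univ _

section

variable {V : Type*} {n K r : ℕ} {π : Fin n → ℕ → V}

theorem SegDisjoint.apply_ne {a b : ℕ} (h : SegDisjoint π a b) {i j : Fin n} (hij : i ≠ j)
    {s s' : ℕ} (hs : s ∈ Set.Ico a b) (hs' : s' ∈ Set.Ico a b) : π i s ≠ π j s' := fun hv =>
  Set.disjoint_left.mp (h i j hij) (Set.mem_image_of_mem _ hs) ⟨s', hs', hv.symm⟩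

theorem isDecomp_val (h : ∀ s < K, ∀ i j : Fin n, i ≠ j → π i s ≠ π j s) :
    IsDecomp K π K (fun k => k) := by
  refine ⟨rfl, rfl, fun _ _ => id, fun k i j hij => ?_⟩
  have hIco : Set.Ico (k.castSucc : ℕ) k.succ = {(k : ℕ)} := by
    ext s
    simp only [Set.mem_Ico, Fin.val_castSucc, Fin.val_succ, Set.mem_singleton_iff]
    omega
  rw [hIco, Set.image_singleton, Set.image_singleton, Set.disjoint_singleton]
  exact h k k.isLt i j hij

namespace IsDecomp

variable {t : Fin (r + 1) → ℕ}

theorem exists_mem_Ioc (ht : IsDecomp K π r t) {i j : Fin n} (hij : i ≠ j) {Ti Tj : ℕ}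
    (hlt : Ti < Tj) (hTj : Tj < K) (hv : π i Ti = π j Tj) :
    ∃ k : Fin (r + 1), t k ∈ Set.Ioc Ti Tj := by
  obtain ⟨h0, hlast, -, hseg⟩ := ht
  obtain ⟨k, hk, hTik⟩ :=
    Fin.exists_castSucc_le_lt_succ t (h0.trans_le Ti.zero_le) (hlast ▸ hlt.trans hTj)
  refine ⟨k.succ, hTik, not_lt.mp fun hTjk => ?_⟩
  exact (hseg k).apply_ne hij ⟨hk, hTik⟩ ⟨hk.trans hlt.le, hTjk⟩ hv

theorem add_one_le (ht : IsDecomp K π r t) (hK : 1 ≤ K) {m : ℕ} {ag1 ag2 : Fin m → Fin n}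
    {Ti Tj : Fin m → ℕ} (hag : ∀ p, ag1 p ≠ ag2 p) (hlt : ∀ p, Ti p < Tj p)
    (hTj : ∀ p, Tj p < K) (hv : ∀ p, π (ag1 p) (Ti p) = π (ag2 p) (Tj p))
    (hdisj : ∀ p q, p ≠ q → Disjoint (Set.Ioc (Ti p) (Tj p)) (Set.Ioc (Ti q) (Tj q))) :
    m + 1 ≤ r := by
  choose k hk using fun p => ht.exists_mem_Ioc (hag p) (hlt p) (hTj p) (hv p)
  have hinj : Function.Injective k := fun p q hpq => by
    by_contra hne
    exact Set.disjoint_left.mp (hdisj p q hne) (hk p) (hpq ▸ hk q)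
  have hk0 : ∀ p, k p ≠ 0 := fun p h0 => by
    have := (hk p).1
    rw [h0, ht.1] at this
    exact Nat.not_lt_zero _ this
  have hklast : ∀ p, k p ≠ Fin.last r := fun p hl => by
    have := (hk p).2
    rw [hl, ht.2.1] at this
    exact (hTj p).not_ge this
  have h0last : (0 : Fin (r + 1)) ≠ Fin.last r := fun h => by
    have := congrArg t h
    rw [ht.1, ht.2.1] at this
    omega
  simpa using Fintype.card_add_two_le_of_injective hinj h0last hk0 hklast

end IsDecomp

end

theorem index_lower_bound {V : Type*} {n K : ℕ} (hK : 1 ≤ K) (π : Fin n → ℕ → V)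
    (hplan : ∀ i j : Fin n, i ≠ j → NonColliding K (π i) (π j)) :
    (∀ i j : Fin n, i ≠ j → ∀ Ti Tj, Ti < Tj → Tj < K → π i Ti = π j Tj →
      ∀ r (t : Fin (r + 1) → ℕ), IsDecomp K π r t →
        ∃ k : Fin (r + 1), Ti < t k ∧ t k ≤ Tj) ∧
    (∀ m : ℕ, ∀ ag1 ag2 : Fin m → Fin n, ∀ Ti Tj : Fin m → ℕ,
      (∀ p, ag1 p ≠ ag2 p) → (∀ p, Ti p < Tj p) → (∀ p, Tj p < K) →
      (∀ p, π (ag1 p) (Ti p) = π (ag2 p) (Tj p)) →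
      (∀ p q, p ≠ q → Disjoint (Set.Ioc (Ti p) (Tj p)) (Set.Ioc (Ti q) (Tj q))) →
      m + 1 ≤ planIndex K π) := by
  refine ⟨fun i j hij Ti Tj hlt hTj hv r t ht => ht.exists_mem_Ioc hij hlt hTj hv, ?_⟩
  intro m ag1 ag2 Ti Tj hag hlt hTj hv hdisj
  have hval : IsDecomp K π K (fun k => k) :=
    isDecomp_val fun s hs i j hij => (hplan i j hij).1 s hs
  exact le_csInf ⟨K, _, hval⟩ fun r ⟨t, ht⟩ => ht.add_one_le hK hag hlt hTj hv hdisj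
end

section
/- Concatenation of decompositions: if a plan P of length K can be split in time at some point 1<s<K+1 such that the restriction of P to times [1,s−1] has a vertex-disjoint decomposition of index r_1 and the restriction to times [s,K] has a vertex-disjoint decomposition of index r_2, then P has a vertex-disjoint decomposition of index r_1+r_2; hence index(P) ≤ index(P restricted to [1,s−1]) + index(P restricted to [s,K]). -/
/-- A vertex-disjoint decomposition of the restriction of a plan to times in [a, b). -/
def IsDecompOn {V : Type*} {n : ℕ} (a b : ℕ) (π : Fin n → ℕ → V) (r : ℕ)
    (t : Fin (r + 1) → ℕ) : Prop :=
  t 0 = a ∧ t (Fin.last r) = b ∧ StrictMono t ∧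
    ∀ k : Fin r, SegDisjoint π (t k.castSucc) (t k.succ)

theorem concat_decompositions {V : Type*} {n K r₁ r₂ : ℕ} (π : Fin n → ℕ → V)
    (hplan : ∀ i j : Fin n, i ≠ j → NonColliding K (π i) (π j))
    (s : ℕ) (hs0 : 0 < s) (hsK : s < K)
    (t₁ : Fin (r₁ + 1) → ℕ) (t₂ : Fin (r₂ + 1) → ℕ)
    (h₁ : IsDecompOn 0 s π r₁ t₁) (h₂ : IsDecompOn s K π r₂ t₂) :
    (∃ t : Fin (r₁ + r₂ + 1) → ℕ, IsDecomp K π (r₁ + r₂) t) ∧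
      planIndex K π ≤ r₁ + r₂ := by
  obtain ⟨h10, h1s, h1m, h1d⟩ := h₁
  obtain ⟨h20, h2K, h2m, h2d⟩ := h₂
  set t : Fin (r₁ + r₂ + 1) → ℕ := fun k =>
    if h : (k : ℕ) < r₁ + 1 then t₁ ⟨k, h⟩ else t₂ ⟨(k : ℕ) - r₁, by omega⟩ with ht
  have hval2 : ∀ (k : Fin (r₁ + r₂ + 1)) (h : r₁ ≤ (k : ℕ)),
      t k = t₂ ⟨(k : ℕ) - r₁, by omega⟩ := by
    intro k h
    simp only [ht]
    split
    · have : (k : ℕ) = r₁ := by omega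
      have h1 : t₁ ⟨(k : ℕ), by omega⟩ = t₁ (Fin.last r₁) := by
        congr 1; ext; simp [this]
      have h2 : t₂ ⟨(k : ℕ) - r₁, by omega⟩ = t₂ 0 := by
        congr 1; ext; simp [this]
      rw [h1, h2, h1s, h20]
    · rfl
  have hmono : StrictMono t := by
    intro i j hij
    rcases lt_or_ge (j : ℕ) (r₁ + 1) with hj | hj
    · have hi : (i : ℕ) < r₁ + 1 := by
        have := (Fin.lt_iff_val_lt_val.mp hij); omega
      simp only [ht, dif_pos hi, dif_pos hj]
      exact h1m (by simpa using Fin.lt_iff_val_lt_val.mp hij)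
    · rcases lt_or_ge (i : ℕ) (r₁ + 1) with hi | hi
      · simp only [ht, dif_pos hi, dif_neg (by omega : ¬ (j : ℕ) < r₁ + 1)]
        calc t₁ ⟨i, hi⟩ ≤ t₁ (Fin.last r₁) :=
              h1m.monotone (by simp [Fin.le_iff_val_le_val]; omega)
          _ = t₂ 0 := by rw [h1s, h20]
          _ < t₂ ⟨(j : ℕ) - r₁, by omega⟩ := h2m (by
              simp [Fin.lt_iff_val_lt_val]; omega)
      · simp only [ht, dif_neg (by omega : ¬ (i : ℕ) < r₁ + 1),
          dif_neg (by omega : ¬ (j : ℕ) < r₁ + 1)]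
        exact h2m (by
          have := Fin.lt_iff_val_lt_val.mp hij
          simp [Fin.lt_iff_val_lt_val]; omega)
  have hdec : IsDecomp K π (r₁ + r₂) t := by
    refine ⟨?_, ?_, hmono, ?_⟩
    · simp only [ht]
      rw [dif_pos (by simp)]
      simpa using h10
    · rw [hval2 (Fin.last _) (by simp)]
      have : (⟨((Fin.last (r₁ + r₂) : Fin (r₁ + r₂ + 1)) : ℕ) - r₁, by simp⟩ :
          Fin (r₂ + 1)) = Fin.last r₂ := by ext; simp
      rw [this, h2K]
    · intro k
      rcases lt_or_ge (k : ℕ) r₁ with hk | hk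
      · have hc : ((k.castSucc : Fin (r₁ + r₂ + 1)) : ℕ) < r₁ + 1 := by simp; omega
        have hs' : ((k.succ : Fin (r₁ + r₂ + 1)) : ℕ) < r₁ + 1 := by simp; omega
        simp only [ht, dif_pos hc, dif_pos hs']
        have := h1d ⟨(k : ℕ), hk⟩
        convert this using 2 <;> simp [Fin.castSucc, Fin.succ]
      · have hc : t k.castSucc = t₂ ⟨(k : ℕ) - r₁, by omega⟩ := by
          rw [hval2 k.castSucc (by simp [hk])]
          exact congrArg t₂ (Fin.ext (by simp))
        have hs' : t k.succ = t₂ ⟨(k : ℕ) + 1 - r₁, by omega⟩ := by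
          rw [hval2 k.succ (by simp; omega)]
          exact congrArg t₂ (Fin.ext (by simp))
        rw [hc, hs']
        have hk2 : (k : ℕ) - r₁ < r₂ := by omega
        have := h2d ⟨(k : ℕ) - r₁, hk2⟩
        convert this using 2
        all_goals first
          | omega
          | (simp [Fin.castSucc, Fin.succ]; omega)
          | simp [Fin.castSucc, Fin.succ]
  exact ⟨⟨t, hdec⟩, Nat.sInf_le ⟨t, hdec⟩⟩
end

section
/- Greedy is a refinement bound: for the greedy decomposition 1=g_0<g_1<...<g_p=K+1 of a plan P and any vertex-disjoint decomposition 1=t_0<t_1<...<t_r=K+1 of P, for every k≤min(p,r) it holds that g_k ≥ t_k; in particular p ≤ r, i.e., the greedy decomposition has the fewest segments. -/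
/-! Induction on `k`: if `t k ≤ g k`, then the disjoint segment `[t k, t (k+1))` contains
`[g k, t (k+1))`, so maximality of the greedy step forces `t (k+1) ≤ g (k+1)`. Taking `k = r`
gives `K = t r ≤ g r`, which is impossible for `r < p` since `g` increases strictly to `K`. -/

lemma SegDisjoint.mono {V : Type*} {n : ℕ} {π : Fin n → ℕ → V} {a b a' b' : ℕ}
    (h : SegDisjoint π a b) (ha : a ≤ a') (hb : b' ≤ b) : SegDisjoint π a' b' := fun i j hij ↦
  (h i j hij).mono (Set.image_mono (Set.Ico_subset_Ico ha hb))
    (Set.image_mono (Set.Ico_subset_Ico ha hb))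

lemma SegDisjoint.le_of_maximal {V : Type*} {n : ℕ} {π : Fin n → ℕ → V} {a b c d K : ℕ}
    (hd : SegDisjoint π c d) (hmax : b = K ∨ ¬ SegDisjoint π a (b + 1)) (hca : c ≤ a)
    (hdK : d ≤ K) : d ≤ b := by
  by_contra! hbd
  rcases hmax with rfl | hnot
  · omega
  · exact hnot (hd.mono hca hbd)

lemma IsDecomp.le_last {V : Type*} {n K r : ℕ} {π : Fin n → ℕ → V} {t : Fin (r + 1) → ℕ}
    (ht : IsDecomp K π r t) (i : Fin (r + 1)) : t i ≤ K :=
  ht.2.1 ▸ ht.2.2.1.monotone (Fin.le_last i)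

theorem IsDecomp.le_greedy {V : Type*} {n K p r : ℕ} {π : Fin n → ℕ → V}
    {g : Fin (p + 1) → ℕ} {t : Fin (r + 1) → ℕ} (ht : IsDecomp K π r t) (hg0 : g 0 = 0)
    (hgreedy : ∀ k : Fin p, (g k.succ : ℕ) = K ∨
      ¬ SegDisjoint π (g k.castSucc) (g k.succ + 1)) :
    ∀ k : ℕ, ∀ hkp : k ≤ p, ∀ hkr : k ≤ r,
      t ⟨k, Nat.lt_succ_of_le hkr⟩ ≤ g ⟨k, Nat.lt_succ_of_le hkp⟩
  | 0, _, _ => by simp only [Fin.zero_eta, ht.1, hg0, le_refl]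
  | k + 1, hkp, hkr =>
    (ht.2.2.2 ⟨k, hkr⟩).le_of_maximal (hgreedy ⟨k, hkp⟩)
      (ht.le_greedy hg0 hgreedy k (by omega) (by omega)) (ht.le_last _)

theorem greedy_refinement_bound {V : Type*} {n K p r : ℕ} (π : Fin n → ℕ → V)
    (g : Fin (p + 1) → ℕ) (t : Fin (r + 1) → ℕ)
    (hg : IsDecomp K π p g)
    (hgreedy : ∀ k : Fin p, (g k.succ : ℕ) = K ∨
      ¬ SegDisjoint π (g k.castSucc) (g k.succ + 1))
    (ht : IsDecomp K π r t) :
    (∀ k : ℕ, ∀ hkp : k ≤ p, ∀ hkr : k ≤ r,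
        t ⟨k, Nat.lt_succ_of_le hkr⟩ ≤ g ⟨k, Nat.lt_succ_of_le hkp⟩) ∧
      p ≤ r := by
  have hle := ht.le_greedy hg.1 hgreedy
  refine ⟨hle, ?_⟩
  by_contra! hrp
  have hgr : g ⟨r, by omega⟩ < K := hg.2.1 ▸ hg.2.2.1 (Fin.mk_lt_mk.mpr hrp)
  have hKr : K ≤ g ⟨r, by omega⟩ := ht.2.1 ▸ hle r hrp.le le_rfl
  exact (hgr.trans_le hKr).false
end
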